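/- arXiv:math/0609836 — 7 statements merged into one kernel-verified Lean document; each statement's English description precedes it below -/
import Mathlib

section
/- Let X be a compact Hausdorff space, Y a Hausdorff space, f : X → X, g : Y → Y continuous, and h : X → Y a continuous surjection with h ∘ f = g ∘ h such that every fiber h⁻¹({y}) (y ∈ Y) is connected. Then for every ŷ ∈ N_g, the fiber ĥ⁻¹({ŷ}) of the lifted map ĥ(ẑ) := (h(z₀), h(z₋₁), …) is a nonempty, compact, connected subset of N_f. -/
/-!
The fiber of the lift over `ŷ` is the intersection of the decreasing sets `E N` of sequences
`z` with `h (z n) = y n` for all `n` that satisfy the orbit relation only below `N`. Overwriting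
the first `N` coordinates of `z` by the forward `f`-orbit of `z N` is a continuous retraction of
the product of the fibers `∏ₙ h⁻¹(yₙ)` onto `E N`, so each `E N` is a continuous image of a
product of connected sets, hence compact and connected. A decreasing intersection of compact
connected sets in a Hausdorff space is compact and connected.
-/

open Set Function

/-- The natural extension of `f : X → X`: the space of full backward orbits
`ẑ = (z₀, z₋₁, z₋₂, …)` with `f (z₋ₙ₋₁) = z₋ₙ`, inside the product `X^ℕ`. -/
def natExt {X : Type*} (f : X → X) : Set (ℕ → X) := {z | ∀ n, f (z (n + 1)) = z n}

theorem IsConnected.iInter_of_directed {α ι : Type*} [TopologicalSpace α] [T2Space α]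
    [Nonempty ι] {C : ι → Set α} (hdir : Directed (· ⊇ ·) C) (hcpt : ∀ i, IsCompact (C i))
    (hconn : ∀ i, IsConnected (C i)) : IsConnected (⋂ i, C i) := by
  let i₀ : ι := Classical.arbitrary ι
  have hK : IsCompact (⋂ i, C i) := (hcpt i₀).of_isClosed_subset
    (isClosed_iInter fun i => (hcpt i).isClosed) (iInter_subset _ i₀)
  refine ⟨IsCompact.nonempty_iInter_of_directed_nonempty_isCompact_isClosed C hdir
    (fun i => (hconn i).nonempty) hcpt (fun i => (hcpt i).isClosed), ?_⟩
  rw [isPreconnected_iff_subset_of_fully_disjoint_closed hK.isClosed]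
  intro u v hu hv hKuv huv
  obtain ⟨U, V, hU, hV, huU, hvV, hUV⟩ := SeparatedNhds.of_isCompact_isCompact
    (hK.inter_right hu) (hK.inter_right hv) (huv.mono inter_subset_right inter_subset_right)
  have hKUV : ⋂ i, C i ⊆ U ∪ V := fun x hx =>
    (hKuv hx).imp (fun hxu => huU ⟨hx, hxu⟩) (fun hxv => hvV ⟨hx, hxv⟩)
  -- by compactness, a single `C i` already lies in `U ∪ V`, and it cannot meet both
  obtain ⟨i, hi⟩ := exists_subset_nhds_of_isCompact hdir hcpt fun x hx =>
    (hU.union hV).mem_nhds (hKUV hx)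
  rcases (hconn i).isPreconnected.subset_or_subset hU hV hUV hi with hiU | hiV
  · refine Or.inl (Disjoint.subset_left_of_subset_union hKuv
      (disjoint_left.2 fun x hxK hxv => ?_))
    exact hUV.le_bot ⟨hiU (mem_iInter.1 hxK i), hvV ⟨hxK, hxv⟩⟩
  · refine Or.inr (Disjoint.subset_right_of_subset_union hKuv
      (disjoint_left.2 fun x hxK hxu => ?_))
    exact hUV.le_bot ⟨huU ⟨hxK, hxu⟩, hiV (mem_iInter.1 hxK i)⟩

section NaturalExtension

variable {X Y : Type*} {f : X → X} {g : Y → Y} {h : X → Y} {N : ℕ} {z : ℕ → X}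

def natExtUpTo (f : X → X) (N : ℕ) : Set (ℕ → X) := {z | ∀ n < N, f (z (n + 1)) = z n}

/-- For `n ≥ N` the truncated difference `N - n` is `0`, so those coordinates are kept. -/
def retractUpTo (f : X → X) (N : ℕ) (z : ℕ → X) : ℕ → X := fun n => f^[N - n] (z (max n N))

theorem natExt_eq_iInter_natExtUpTo (f : X → X) : natExt f = ⋂ N, natExtUpTo f N := by
  ext z
  simp only [natExt, natExtUpTo, mem_iInter]
  exact ⟨fun hz _ n _ => hz n, fun hz n => hz (n + 1) n n.lt_succ_self⟩

theorem natExt_subset_natExtUpTo (f : X → X) (N : ℕ) : natExt f ⊆ natExtUpTo f N :=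
  natExt_eq_iInter_natExtUpTo f ▸ iInter_subset _ N

theorem antitone_natExtUpTo (f : X → X) : Antitone (natExtUpTo f) :=
  fun _ _ hMN _ hz n hn => hz n (hn.trans_le hMN)

theorem isClosed_natExtUpTo [TopologicalSpace X] [T2Space X] (hf : Continuous f) (N : ℕ) :
    IsClosed (natExtUpTo f N) := by
  simp only [natExtUpTo, ofPred_forall]
  exact isClosed_iInter fun n => isClosed_iInter fun _ =>
    isClosed_eq (hf.comp (continuous_apply (n + 1))) (continuous_apply n)

theorem iterate_apply_of_mem_natExtUpTo (hz : z ∈ natExtUpTo f N) :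
    ∀ {n k : ℕ}, n + k ≤ N → f^[k] (z (n + k)) = z n
  | _, 0, _ => rfl
  | n, k + 1, hnk => by
    rw [iterate_succ_apply', ← add_assoc, add_right_comm,
      iterate_apply_of_mem_natExtUpTo hz (by omega), hz n (by omega)]

theorem retractUpTo_mem_natExtUpTo (f : X → X) (N : ℕ) (z : ℕ → X) :
    retractUpTo f N z ∈ natExtUpTo f N := by
  intro n hn
  simp only [retractUpTo, max_eq_right hn.le, max_eq_right (Nat.succ_le_of_lt hn),
    ← iterate_succ_apply' f]
  congr 2
  omega

theorem retractUpTo_of_mem_natExtUpTo (hz : z ∈ natExtUpTo f N) : retractUpTo f N z = z := by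
  funext n
  rcases le_total N n with hNn | hnN
  · simp [retractUpTo, hNn]
  · simpa [retractUpTo, hnN, Nat.add_sub_cancel' hnN] using
      iterate_apply_of_mem_natExtUpTo hz (Nat.add_sub_cancel' hnN).le

theorem continuous_retractUpTo [TopologicalSpace X] (hf : Continuous f) (N : ℕ) :
    Continuous (retractUpTo f N) :=
  continuous_pi fun _ => (hf.iterate _).comp (continuous_apply _)

theorem Function.Semiconj.comp_retractUpTo (hconj : Semiconj h f g) (N : ℕ) (z : ℕ → X) :
    h ∘ retractUpTo f N z = retractUpTo g N (h ∘ z) :=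
  funext fun _ => (hconj.iterate_right _).eq _

theorem natExtUpTo_inter_fibers_eq_image (hconj : Semiconj h f g) {y : ℕ → Y}
    (hy : y ∈ natExtUpTo g N) :
    natExtUpTo f N ∩ {z | ∀ n, h (z n) = y n} =
      retractUpTo f N '' {z | ∀ n, h (z n) = y n} := by
  refine Subset.antisymm (fun z hz => ⟨z, hz.2, retractUpTo_of_mem_natExtUpTo hz.1⟩) ?_
  rintro _ ⟨w, hw, rfl⟩
  have hhw : h ∘ w = y := funext hw
  refine ⟨retractUpTo_mem_natExtUpTo f N w, fun n => ?_⟩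
  rw [← retractUpTo_of_mem_natExtUpTo hy, ← hhw, ← hconj.comp_retractUpTo]
  rfl

end NaturalExtension

theorem lift_fibers_nonempty_compact_connected_general {X Y : Type*}
    [TopologicalSpace X] [TopologicalSpace Y]
    [CompactSpace X] [T2Space X] [T2Space Y]
    (f : X → X) (g : Y → Y) (h : X → Y)
    (hf : Continuous f) (hh : Continuous h)
    (hconj : h ∘ f = g ∘ h)
    (hfib : ∀ y : Y, IsConnected (h ⁻¹' {y})) :
    ∀ y ∈ natExt g,
      ({z : ℕ → X | z ∈ natExt f ∧ ∀ n, h (z n) = y n}).Nonempty ∧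
      IsCompact {z : ℕ → X | z ∈ natExt f ∧ ∀ n, h (z n) = y n} ∧
      IsConnected {z : ℕ → X | z ∈ natExt f ∧ ∀ n, h (z n) = y n} := by
  intro y hy
  set F : Set (ℕ → X) := {z | ∀ n, h (z n) = y n}
  have hFpi : F = univ.pi fun n => h ⁻¹' {y n} := by ext; simp [F]
  have hFclosed : IsClosed F :=
    hFpi ▸ isClosed_set_pi fun n _ => isClosed_singleton.preimage hh
  have hFconn : IsConnected F := hFpi ▸ isConnected_univ_pi.2 fun n => hfib (y n)
  have hE_cpt : ∀ N, IsCompact (natExtUpTo f N ∩ F) := fun N =>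
    ((isClosed_natExtUpTo hf N).inter hFclosed).isCompact
  have hE_conn : ∀ N, IsConnected (natExtUpTo f N ∩ F) := fun N => by
    rw [natExtUpTo_inter_fibers_eq_image (semiconj_iff_comp_eq.2 hconj)
      (natExt_subset_natExtUpTo g N hy)]
    exact hFconn.image _ (continuous_retractUpTo hf N).continuousOn
  have hE_dir : Directed (· ⊇ ·) fun N => natExtUpTo f N ∩ F :=
    Antitone.directed_ge fun _ _ hMN => inter_subset_inter_left F (antitone_natExtUpTo f hMN)
  have hS : {z : ℕ → X | z ∈ natExt f ∧ ∀ n, h (z n) = y n} = ⋂ N, natExtUpTo f N ∩ F := by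
    rw [← iInter_inter, ← natExt_eq_iInter_natExtUpTo]
    rfl
  have hS_conn := hS ▸ IsConnected.iInter_of_directed hE_dir hE_cpt hE_conn
  refine ⟨hS_conn.nonempty, ?_, hS_conn⟩
  exact hS ▸ (isClosed_iInter fun N => (hE_cpt N).isClosed).isCompact

theorem lift_fibers_nonempty_compact_connected {X Y : Type*}
    [TopologicalSpace X] [TopologicalSpace Y]
    [CompactSpace X] [T2Space X] [T2Space Y]
    (f : X → X) (g : Y → Y) (h : X → Y)
    (hf : Continuous f) (hg : Continuous g) (hh : Continuous h)
    (hsurj : Function.Surjective h) (hconj : h ∘ f = g ∘ h)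
    (hfib : ∀ y : Y, IsConnected (h ⁻¹' {y})) :
    ∀ y ∈ natExt g,
      ({z : ℕ → X | z ∈ natExt f ∧ ∀ n, h (z n) = y n}).Nonempty ∧
      IsCompact {z : ℕ → X | z ∈ natExt f ∧ ∀ n, h (z n) = y n} ∧
      IsConnected {z : ℕ → X | z ∈ natExt f ∧ ∀ n, h (z n) = y n} :=
  lift_fibers_nonempty_compact_connected_general f g h hf hh hconj hfib
end

section
/- Let (X,d) be a nonempty compact metric space and let f_k, f : X → X be continuous maps with f_k → f uniformly on X as k → ∞. Equip X^ℕ with the metric d̂(ẑ, ŵ) := Σ_{n≥0} 2^{−n} d(z₋ₙ, w₋ₙ). Then sup_{ẑ ∈ N_{f_k}} inf_{ŵ ∈ N_f} d̂(ẑ, ŵ) → 0 as k → ∞ (where the supremum over an empty set is taken as 0); that is, the natural extensions N_{f_k} eventually lie in any d̂-neighborhood of N_f. -/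
/-- The metric `d̂(ẑ, ŵ) = Σₙ 2⁻ⁿ d(z₋ₙ, w₋ₙ)` on `X^ℕ`. -/
noncomputable def dhat {X : Type*} [MetricSpace X] (z w : ℕ → X) : ℝ :=
  ∑' n : ℕ, dist (z n) (w n) / 2 ^ n

open Filter Topology

lemma dhat_nonneg {X : Type*} [MetricSpace X] (z w : ℕ → X) : 0 ≤ dhat z w :=
  tsum_nonneg fun _ => by positivity

lemma tendsto_dhat_of_tendsto {X ι : Type*} [MetricSpace X] [BoundedSpace X] {l : Filter ι}
    {z : ι → ℕ → X} {a : ℕ → X} (hz : Tendsto z l (𝓝 a)) :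
    Tendsto (fun i => dhat (z i) a) l (𝓝 0) := by
  set D := Metric.diam (Set.univ : Set X)
  have hdist : ∀ x y : X, dist x y ≤ D := fun x y =>
    Metric.dist_le_diam_of_mem BoundedSpace.bounded_univ trivial trivial
  have hsum : Summable fun n : ℕ => D / 2 ^ n := by
    simpa [div_eq_mul_inv] using summable_geometric_two.mul_left D
  have hterm (n : ℕ) : Tendsto (fun i => dist (z i n) (a n) / 2 ^ n) l (𝓝 0) := by
    simpa using
      ((tendsto_pi_nhds.1 hz n).dist (tendsto_const_nhds (x := a n))).div_const ((2 : ℝ) ^ n)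
  simpa [dhat] using tendsto_tsum_of_dominated_convergence hsum hterm
    (Eventually.of_forall fun i n => by
      rw [Real.norm_of_nonneg (by positivity)]
      gcongr
      exact hdist _ _)

lemma mem_natExt_of_tendsto {X ι : Type*} [UniformSpace X] [T2Space X] {l : Filter ι} [l.NeBot]
    {F : ι → X → X} {f : X → X} (hunif : TendstoUniformly F f l) (hf : Continuous f)
    {z : ι → ℕ → X} {a : ℕ → X} (hzF : ∀ᶠ i in l, z i ∈ natExt (F i))
    (hz : Tendsto z l (𝓝 a)) : a ∈ natExt f := fun n =>
  tendsto_nhds_unique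
    ((hunif.tendsto_comp hf.continuousAt (tendsto_pi_nhds.1 hz (n + 1))).congr'
      (hzF.mono fun _ hi => hi n))
    (tendsto_pi_nhds.1 hz n)

lemma eventually_exists_natExt_dhat_lt {X ι : Type*} [MetricSpace X] [CompactSpace X]
    {l : Filter ι} {F : ι → X → X} {f : X → X} (hunif : TendstoUniformly F f l)
    (hf : Continuous f) {z : ι → ℕ → X} (hzF : ∀ᶠ i in l, z i ∈ natExt (F i))
    {ε : ℝ} (hε : 0 < ε) : ∀ᶠ i in l, ∃ w ∈ natExt f, dhat (z i) w < ε := by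
  by_contra hfar
  rw [not_eventually, frequently_iff_neBot] at hfar
  obtain ⟨𝒰, h𝒰⟩ := Ultrafilter.exists_le (l ⊓ 𝓟 {i | ¬∃ w ∈ natExt f, dhat (z i) w < ε})
  obtain ⟨a, -, ha⟩ := isCompact_univ.ultrafilter_le_nhds (𝒰.map z) (by simp)
  have h𝒰l : (𝒰 : Filter ι) ≤ l := h𝒰.trans inf_le_left
  have haf : a ∈ natExt f :=
    mem_natExt_of_tendsto (fun u hu => (hunif u hu).filter_mono h𝒰l) hf (hzF.filter_mono h𝒰l) ha
  have hfar' : ∀ᶠ i in (𝒰 : Filter ι), ¬∃ w ∈ natExt f, dhat (z i) w < ε :=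
    (h𝒰.trans inf_le_right) (mem_principal_self _)
  obtain ⟨i, hi, hnear⟩ := (hfar'.and ((tendsto_dhat_of_tendsto ha).eventually_lt_const hε)).exists
  exact hi ⟨a, haf, hnear⟩

/-- Applying `eventually_exists_natExt_dhat_lt` to the family of all orbits
`p : Σ i, natExt (F i)` makes it uniform in the orbit. -/
lemma eventually_forall_natExt_exists_dhat_lt {X ι : Type*} [MetricSpace X] [CompactSpace X]
    {l : Filter ι} {F : ι → X → X} {f : X → X} (hunif : TendstoUniformly F f l)
    (hf : Continuous f) {ε : ℝ} (hε : 0 < ε) :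
    ∀ᶠ i in l, ∀ z ∈ natExt (F i), ∃ w ∈ natExt f, dhat z w < ε := by
  have := eventually_exists_natExt_dhat_lt (l := comap Sigma.fst l)
    (F := fun p : Σ i, natExt (F i) => F p.1) (fun u hu => (hunif u hu).comap _) hf
    (z := fun p => p.2) (Eventually.of_forall fun p => p.2.2) hε
  rw [eventually_comap] at this
  exact this.mono fun i hi z hz => hi ⟨i, z, hz⟩ rfl

theorem natExt_semicontinuous_of_tendstoUniformly_general {X : Type*} [MetricSpace X]
    [CompactSpace X]
    (F : ℕ → X → X) (f : X → X)
    (hf : Continuous f)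
    (hunif : TendstoUniformly F f Filter.atTop) :
    Filter.Tendsto
      (fun k => ⨆ z : natExt (F k), ⨅ w : natExt f, dhat (z : ℕ → X) (w : ℕ → X))
      Filter.atTop (nhds 0) := by
  refine tendsto_order.2 ⟨fun a ha => Eventually.of_forall fun k =>
    ha.trans_le (Real.iSup_nonneg fun z => Real.iInf_nonneg fun w => dhat_nonneg _ _),
    fun ε hε => ?_⟩
  filter_upwards [eventually_forall_natExt_exists_dhat_lt hunif hf (half_pos hε)] with k hk
  refine (Real.iSup_le (fun z => ?_) (half_pos hε).le).trans_lt (half_lt_self hε)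
  obtain ⟨w, hw, hzw⟩ := hk z z.2
  exact (ciInf_le ⟨0, Set.forall_mem_range.2 fun w => dhat_nonneg _ _⟩ ⟨w, hw⟩).trans hzw.le

/-- If `f_k → f` uniformly on a nonempty compact metric space, then the natural
extensions `N_{f_k}` eventually lie in any `d̂`-neighborhood of `N_f`:
`sup_{ẑ ∈ N_{f_k}} inf_{ŵ ∈ N_f} d̂(ẑ, ŵ) → 0` (with `sup ∅ = 0`). -/
theorem natExt_semicontinuous_of_tendstoUniformly {X : Type*} [MetricSpace X]
    [CompactSpace X] [Nonempty X]
    (F : ℕ → X → X) (f : X → X)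
    (hF : ∀ k, Continuous (F k)) (hf : Continuous f)
    (hunif : TendstoUniformly F f Filter.atTop) :
    Filter.Tendsto
      (fun k => ⨆ z : natExt (F k), ⨅ w : natExt f, dhat (z : ℕ → X) (w : ℕ → X))
      Filter.atTop (nhds 0) :=
  natExt_semicontinuous_of_tendstoUniformly_general F f hf hunif
end

section
/- Let H : ℂ → ℂ be continuous and let δ₁(w) = a₁ + b₁·w and δ₂(w) = a₂ + b₂·w be affine maps of ℂ with b₁ ≠ 0 and b₂ ≠ 0. Then the extension operation is affinely natural: v_{δ₁∘H∘δ₂}(w,t) = |b₁| · v_H(δ₂(w), |b₂|·t) for all (w,t) ∈ ℂ × [0,∞), and consequently e(δ₁ ∘ H ∘ δ₂) = e(δ₁) ∘ e(H) ∘ e(δ₂) as maps of ℂ × [0,∞). -/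
/-!
Post-composing with `z ↦ a + b z` multiplies every difference `H (w + W) - H w` by `b`, and
`sSup` commutes with multiplication by `‖b‖ ≥ 0`; pre-composing with it maps the circle of
radius `t` onto the circle of radius `‖b‖ t`, so the supremum runs over the same values.
The affine maps themselves are the case `H = id`, whose `vmax` is `t`.
-/

/-- `v_H(w,t) = max_{|W| = t} |H(w+W) - H(w)|`, realized as the supremum of the
(compact, hence bounded) image of the circle of radius `t`. -/
noncomputable def vmax (H : ℂ → ℂ) (w : ℂ) (t : ℝ) : ℝ :=
  sSup ((fun W => ‖H (w + W) - H w‖) '' Metric.sphere (0 : ℂ) t)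

/-- The extension `e(H)(w,t) = (H(w), v_H(w,t))` of `H` to `ℂ × [0,∞)`. -/
noncomputable def extMap (H : ℂ → ℂ) : ℂ × ℝ → ℂ × ℝ :=
  fun p => (H p.1, vmax H p.1 p.2)

theorem vmax_nonneg (H : ℂ → ℂ) (w : ℂ) (t : ℝ) : 0 ≤ vmax H w t :=
  Real.sSup_nonneg <| Set.forall_mem_image.2 fun _ _ => norm_nonneg _

theorem vmax_const_add_mul (H : ℂ → ℂ) (a b w : ℂ) (t : ℝ) :
    vmax (fun z => a + b * H z) w t = ‖b‖ * vmax H w t := by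
  rw [vmax, vmax, ← smul_eq_mul (‖b‖), ← Real.sSup_smul_of_nonneg (norm_nonneg b),
    ← Set.image_smul, Set.image_image]
  refine congrArg sSup (Set.image_congr fun W _ => ?_)
  rw [smul_eq_mul, ← norm_mul, mul_sub, add_sub_add_left_eq_sub]

open scoped Pointwise in
theorem vmax_comp_const_add_mul (H : ℂ → ℂ) (a : ℂ) {b : ℂ} (hb : b ≠ 0) (w : ℂ) (t : ℝ) :
    vmax (fun z => H (a + b * z)) w t = vmax H (a + b * w) (‖b‖ * t) := by
  have hsphere : Metric.sphere (0 : ℂ) (‖b‖ * t) = b • Metric.sphere (0 : ℂ) t := by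
    rw [smul_sphere' hb, smul_zero]
  rw [vmax, vmax, hsphere, ← Set.image_smul, Set.image_image]
  refine congrArg sSup (Set.image_congr fun W _ => ?_)
  rw [smul_eq_mul, mul_add, add_assoc]

theorem vmax_id (w : ℂ) {t : ℝ} (ht : 0 ≤ t) : vmax (fun z => z) w t = t := by
  have himage : (fun W => ‖w + W - w‖) '' Metric.sphere (0 : ℂ) t = {t} := by
    rw [← (NormedSpace.sphere_nonempty (x := (0 : ℂ)).2 ht).image_const t]
    exact Set.image_congr fun W hW => by simpa using hW
  rw [vmax, himage, csSup_singleton]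

theorem vmax_const_add_mul_self (a b w : ℂ) {t : ℝ} (ht : 0 ≤ t) :
    vmax (fun z => a + b * z) w t = ‖b‖ * t := by
  rw [vmax_const_add_mul (fun z => z), vmax_id w ht]

theorem extMap_affinely_natural_general (H : ℂ → ℂ)
    (a₁ b₁ a₂ b₂ : ℂ) (hb₂ : b₂ ≠ 0) :
    (∀ (w : ℂ) (t : ℝ), 0 ≤ t →
      vmax (fun z => a₁ + b₁ * H (a₂ + b₂ * z)) w t
        = ‖b₁‖ * vmax H (a₂ + b₂ * w) (‖b₂‖ * t)) ∧
    (∀ (w : ℂ) (t : ℝ), 0 ≤ t →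
      extMap (fun z => a₁ + b₁ * H (a₂ + b₂ * z)) (w, t)
        = extMap (fun z => a₁ + b₁ * z)
            (extMap H (extMap (fun z => a₂ + b₂ * z) (w, t)))) := by
  have hv (w : ℂ) (t : ℝ) : vmax (fun z => a₁ + b₁ * H (a₂ + b₂ * z)) w t
      = ‖b₁‖ * vmax H (a₂ + b₂ * w) (‖b₂‖ * t) := by
    rw [vmax_const_add_mul (fun z => H (a₂ + b₂ * z)), vmax_comp_const_add_mul H a₂ hb₂]
  refine ⟨fun w t _ => hv w t, fun w t ht => ?_⟩
  simp only [extMap, vmax_const_add_mul_self _ _ _ ht,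
    vmax_const_add_mul_self _ _ _ (vmax_nonneg _ _ _), hv]

/-- Affine naturality of the extension: for affine `δ₁(w) = a₁ + b₁w`,
`δ₂(w) = a₂ + b₂w` with `b₁, b₂ ≠ 0`, one has
`v_{δ₁∘H∘δ₂}(w,t) = |b₁|·v_H(δ₂ w, |b₂| t)` and
`e(δ₁ ∘ H ∘ δ₂) = e(δ₁) ∘ e(H) ∘ e(δ₂)` on `ℂ × [0,∞)`. -/
theorem extMap_affinely_natural (H : ℂ → ℂ) (hH : Continuous H)
    (a₁ b₁ a₂ b₂ : ℂ) (hb₁ : b₁ ≠ 0) (hb₂ : b₂ ≠ 0) :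
    (∀ (w : ℂ) (t : ℝ), 0 ≤ t →
      vmax (fun z => a₁ + b₁ * H (a₂ + b₂ * z)) w t
        = ‖b₁‖ * vmax H (a₂ + b₂ * w) (‖b₂‖ * t)) ∧
    (∀ (w : ℂ) (t : ℝ), 0 ≤ t →
      extMap (fun z => a₁ + b₁ * H (a₂ + b₂ * z)) (w, t)
        = extMap (fun z => a₁ + b₁ * z)
            (extMap H (extMap (fun z => a₂ + b₂ * z) (w, t)))) :=
  extMap_affinely_natural_general H a₁ b₁ a₂ b₂ hb₂
end

section
/- Let H_k, H : ℂ → ℂ be continuous maps such that H_k → H uniformly on every compact subset of ℂ. Then e(H_k) → e(H) uniformly on every compact subset of ℂ × [0,∞); that is, the extension H ↦ e(H) depends continuously on H in the compact-open topology. -/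
/-! Taking the supremum over a fixed set is `1`-Lipschitz for the sup-distance of the
functions, so `|v_G(w,t) - v_H(w,t)| ≤ 2δ` whenever `G` and `H` are `δ`-close on the
closed disc of radius `t` about `w`. For `(w,t)` in a compact set these discs all lie in
one compact disc, on which `H_k → H` uniformly. -/

open Metric

section SupImage

variable {α : Type*} {S : Set α} {f g : α → ℝ} {δ : ℝ}

theorem sSup_image_le_sSup_image_add (hS : S.Nonempty) (hg : BddAbove (g '' S))
    (h : ∀ x ∈ S, f x ≤ g x + δ) : sSup (f '' S) ≤ sSup (g '' S) + δ :=
  csSup_le (hS.image f) <| by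
    rintro _ ⟨x, hx, rfl⟩
    exact (h x hx).trans (add_le_add_left (le_csSup hg ⟨x, hx, rfl⟩) δ)

theorem abs_sSup_image_sub_sSup_image_le (hS : S.Nonempty) (hf : BddAbove (f '' S))
    (hg : BddAbove (g '' S)) (h : ∀ x ∈ S, |f x - g x| ≤ δ) :
    |sSup (f '' S) - sSup (g '' S)| ≤ δ := by
  have hfg := sSup_image_le_sSup_image_add (f := f) hS hg fun x hx => by
    linarith [(abs_sub_le_iff.1 (h x hx)).1]
  have hgf := sSup_image_le_sSup_image_add (f := g) hS hf fun x hx => by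
    linarith [(abs_sub_le_iff.1 (h x hx)).2]
  exact abs_sub_le_iff.2 ⟨by linarith, by linarith⟩

end SupImage

theorem bddAbove_image_sphere_norm_sub {H : ℂ → ℂ} (hH : Continuous H) (w : ℂ) (t : ℝ) :
    BddAbove ((fun W => ‖H (w + W) - H w‖) '' sphere (0 : ℂ) t) :=
  ((isCompact_sphere 0 t).image (by fun_prop)).bddAbove

theorem dist_vmax_le {G H : ℂ → ℂ} (hG : Continuous G) (hH : Continuous H) {w : ℂ} {t δ : ℝ}
    (ht : 0 ≤ t) (h : ∀ z ∈ closedBall w t, dist (G z) (H z) ≤ δ) :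
    dist (vmax G w t) (vmax H w t) ≤ 2 * δ := by
  refine abs_sSup_image_sub_sSup_image_le (NormedSpace.sphere_nonempty.2 ht)
    (bddAbove_image_sphere_norm_sub hG w t) (bddAbove_image_sphere_norm_sub hH w t)
    fun W hW => ?_
  have hW' : w + W ∈ closedBall w t := by
    simpa [mem_sphere_zero_iff_norm] using hW.le
  calc |‖G (w + W) - G w‖ - ‖H (w + W) - H w‖|
      ≤ ‖(G (w + W) - G w) - (H (w + W) - H w)‖ := abs_norm_sub_norm_le _ _
    _ ≤ dist (G (w + W)) (H (w + W)) + dist (G w) (H w) := by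
      rw [dist_eq_norm, dist_eq_norm, sub_sub_sub_comm]
      exact norm_sub_le _ _
    _ ≤ 2 * δ := by linarith [h _ hW', h w (mem_closedBall_self ht)]

theorem dist_extMap_le {G H : ℂ → ℂ} (hG : Continuous G) (hH : Continuous H) {p : ℂ × ℝ}
    {δ : ℝ} (hp : 0 ≤ p.2) (h : ∀ z ∈ closedBall p.1 p.2, dist (G z) (H z) ≤ δ) :
    dist (extMap G p) (extMap H p) ≤ 2 * δ := by
  have hδ : dist (G p.1) (H p.1) ≤ δ := h p.1 (mem_closedBall_self hp)
  exact max_le (hδ.trans (by linarith [dist_nonneg.trans hδ])) (dist_vmax_le hG hH hp h)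

theorem Bornology.IsBounded.exists_closedBall_subset_closedBall {E : Type*}
    [SeminormedAddCommGroup E] {K : Set (E × ℝ)} (hK : Bornology.IsBounded K) :
    ∃ R, ∀ p ∈ K, closedBall p.1 p.2 ⊆ closedBall (0 : E) R := by
  obtain ⟨r, hr⟩ := hK.subset_closedBall 0
  refine ⟨2 * r, fun p hp z hz => ?_⟩
  have hpr : ‖p‖ ≤ r := mem_closedBall_zero_iff.1 (hr hp)
  rw [mem_closedBall_zero_iff]
  calc ‖z‖ ≤ ‖p.1‖ + p.2 :=
        (norm_le_norm_add_norm_sub' z p.1).trans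
          (add_le_add_right (mem_closedBall_iff_norm.1 hz) _)
    _ ≤ ‖p‖ + ‖p‖ := add_le_add (norm_fst_le p) ((le_abs_self _).trans (norm_snd_le p))
    _ ≤ 2 * r := by linarith

/-- The extension `H ↦ e(H)` depends continuously on `H` in the compact-open
topology: locally uniform convergence `H_k → H` on `ℂ` implies locally uniform
convergence `e(H_k) → e(H)` on `ℂ × [0,∞)`. -/
theorem extMap_continuous_in_map (Hk : ℕ → ℂ → ℂ) (H : ℂ → ℂ)
    (hHk : ∀ k, Continuous (Hk k)) (hH : Continuous H)
    (hconv : ∀ K : Set ℂ, IsCompact K → TendstoUniformlyOn Hk H Filter.atTop K) :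
    ∀ K : Set (ℂ × ℝ), IsCompact K → (∀ p ∈ K, 0 ≤ p.2) →
      TendstoUniformlyOn (fun k => extMap (Hk k)) (extMap H) Filter.atTop K := by
  intro K hK hKpos
  obtain ⟨R, hR⟩ := hK.isBounded.exists_closedBall_subset_closedBall
  rw [Metric.tendstoUniformlyOn_iff]
  intro ε hε
  filter_upwards [Metric.tendstoUniformlyOn_iff.1 (hconv _ (isCompact_closedBall 0 R))
    (ε / 3) (by positivity)] with k hk p hp
  calc dist (extMap H p) (extMap (Hk k) p) ≤ 2 * (ε / 3) :=
        dist_extMap_le hH (hHk k) (hKpos p hp) fun z hz => (hk z (hR p hp hz)).le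
    _ < ε := by linarith
end

section
/- Let λ > 0, 0 < ρ₁ < ρ₂ < λ and ε > 0 with ρ₁ + ε < ρ₂. Define H_ε on the open disk 𝔻_λ = {w ∈ ℂ : |w| < λ} by H_ε(w) = w + ε if |w| < ρ₁, H_ε(w) = w + ε·(ρ₂ − |w|)/(ρ₂ − ρ₁) if ρ₁ ≤ |w| ≤ ρ₂, and H_ε(w) = w if ρ₂ < |w| < λ. Then H_ε is a homeomorphism of 𝔻_λ onto itself (in particular H_ε is well defined, maps 𝔻_λ into 𝔻_λ, is a continuous bijection, and its inverse is continuous), and H_ε equals the identity on the annulus {ρ₂ < |w| < λ}. -/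
/-!
Writing `φ` for the piecewise linear ramp that is `1` on `(-∞, ρ₁]` and `0` on `[ρ₂, ∞)`,
`H_ε(w) = w + φ(|w|) ε`. Since `φ` is `(ρ₂ - ρ₁)⁻¹`-Lipschitz and `ε < ρ₂ - ρ₁`, the map
`H_ε - id` is a contraction of `ℂ`, so `H_ε` is a homeomorphism of `ℂ` (its inverse comes from
the contraction mapping principle). It sends the closed disk of radius `ρ₂` into itself and fixes
every point outside it, hence it restricts to a homeomorphism of `𝔻_λ`.
-/

/-- The sliding map `H_ε` of the proof of Theorem 3.2 (relaxing superattracting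
cycles): `H_ε(w) = w + ε` for `|w| < ρ₁`, interpolated on `ρ₁ ≤ |w| ≤ ρ₂`, and the
identity for `|w| > ρ₂`. -/
noncomputable def Heps (ρ₁ ρ₂ ε : ℝ) (w : ℂ) : ℂ :=
  if ‖w‖ < ρ₁ then w + (ε : ℂ)
  else if ‖w‖ ≤ ρ₂ then
    w + (ε : ℂ) * (((ρ₂ - ‖w‖) / (ρ₂ - ρ₁) : ℝ) : ℂ)
  else w

open Metric
open scoped NNReal

section

variable {E : Type*} [NormedAddCommGroup E] [NormedSpace ℝ E]

noncomputable def Homeomorph.ofLipschitzWithSubId [CompleteSpace E] {f : E → E} {K : ℝ≥0}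
    (hf : LipschitzWith K (f - id)) (hK : K < 1) : E ≃ₜ E :=
  ApproximatesLinearOn.toHomeomorph (f' := ContinuousLinearEquiv.refl ℝ E) f
    (hf.lipschitzOnWith.approximatesLinearOn)
    (by
      rcases subsingleton_or_nontrivial E with hE | hE
      · exact .inl hE
      · right
        simpa [ContinuousLinearMap.nnnorm_id] using hK)

theorem LipschitzWith.smul_comp_norm {φ : ℝ → ℝ} {K : ℝ≥0} (hφ : LipschitzWith K φ) (v : E) :
    LipschitzWith (K * ‖v‖₊) fun w : E => φ ‖w‖ • v := by
  refine LipschitzWith.of_dist_le_mul fun x y => ?_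
  calc dist (φ ‖x‖ • v) (φ ‖y‖ • v) = dist (φ ‖x‖) (φ ‖y‖) * ‖v‖ := by
        rw [dist_eq_norm, ← sub_smul, norm_smul, Real.dist_eq, Real.norm_eq_abs]
    _ ≤ K * dist ‖x‖ ‖y‖ * ‖v‖ := by gcongr; exact hφ.dist_le_mul _ _
    _ ≤ K * ‖x - y‖ * ‖v‖ := by gcongr; exact dist_norm_norm_le x y
    _ = (K * ‖v‖₊ : ℝ≥0) * dist x y := by rw [dist_eq_norm]; push_cast; ring

end

noncomputable def rampDown (a b r : ℝ) : ℝ :=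
  max 0 (min 1 ((b - r) / (b - a)))

theorem lipschitzWith_rampDown {a b : ℝ} (hab : a < b) :
    LipschitzWith (Real.toNNReal (b - a)⁻¹) (rampDown a b) := by
  have hlin : LipschitzWith (Real.toNNReal (b - a)⁻¹) fun r : ℝ => (b - r) / (b - a) := by
    refine LipschitzWith.of_dist_le_mul fun x y => ?_
    rw [Real.coe_toNNReal _ (inv_nonneg.2 (sub_pos.2 hab).le), Real.dist_eq, Real.dist_eq,
      ← sub_div, sub_sub_sub_cancel_left, abs_div, abs_of_pos (sub_pos.2 hab), abs_sub_comm,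
      div_eq_inv_mul]
  exact (hlin.const_min 1).const_max 0

theorem rampDown_nonneg (a b r : ℝ) : 0 ≤ rampDown a b r :=
  le_max_left _ _

theorem rampDown_le {a b r : ℝ} (hab : a < b) (hr : r ≤ b) : rampDown a b r ≤ (b - r) / (b - a) :=
  max_le (div_nonneg (sub_nonneg.2 hr) (sub_pos.2 hab).le) (min_le_right _ _)

theorem Heps_eq_add_rampDown {ρ₁ ρ₂ : ℝ} (ε : ℝ) (h : ρ₁ < ρ₂) (w : ℂ) :
    Heps ρ₁ ρ₂ ε w = w + rampDown ρ₁ ρ₂ ‖w‖ • (ε : ℂ) := by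
  have hρ : 0 < ρ₂ - ρ₁ := sub_pos.2 h
  unfold Heps rampDown
  split_ifs with h₁ h₂
  · rw [min_eq_left ((one_le_div hρ).2 (by linarith)), max_eq_right zero_le_one, one_smul]
  · rw [min_eq_right ((div_le_one hρ).2 (by linarith)),
      max_eq_right (div_nonneg (by linarith) hρ.le), Complex.real_smul, mul_comm]
  · rw [min_eq_right ((div_le_one hρ).2 (by linarith)),
      max_eq_left (div_nonpos_of_nonpos_of_nonneg (by linarith) hρ.le), zero_smul, add_zero]

theorem Heps_of_lt_norm {ρ₁ ρ₂ : ℝ} (ε : ℝ) (h : ρ₁ < ρ₂) {w : ℂ} (hw : ρ₂ < ‖w‖) :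
    Heps ρ₁ ρ₂ ε w = w := by
  simp [Heps, hw.not_ge, (h.trans hw).not_gt]

theorem norm_Heps_le {ρ₁ ρ₂ ε : ℝ} (h : ρ₁ < ρ₂) (hε : |ε| ≤ ρ₂ - ρ₁) {w : ℂ} (hw : ‖w‖ ≤ ρ₂) :
    ‖Heps ρ₁ ρ₂ ε w‖ ≤ ρ₂ := by
  have hρ : 0 < ρ₂ - ρ₁ := sub_pos.2 h
  have hramp : rampDown ρ₁ ρ₂ ‖w‖ * |ε| ≤ ρ₂ - ‖w‖ :=
    calc rampDown ρ₁ ρ₂ ‖w‖ * |ε| ≤ (ρ₂ - ‖w‖) / (ρ₂ - ρ₁) * (ρ₂ - ρ₁) := by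
          gcongr
          exact rampDown_le h hw
      _ = ρ₂ - ‖w‖ := div_mul_cancel₀ _ hρ.ne'
  calc ‖Heps ρ₁ ρ₂ ε w‖ ≤ ‖w‖ + rampDown ρ₁ ρ₂ ‖w‖ * |ε| := by
        rw [Heps_eq_add_rampDown ε h]
        refine (norm_add_le _ _).trans_eq ?_
        rw [norm_smul, Complex.norm_real, Real.norm_eq_abs, Real.norm_eq_abs,
          abs_of_nonneg (rampDown_nonneg _ _ _)]
    _ ≤ ρ₂ := by linarith

theorem Heps_mem_ball_iff {lam ρ₁ ρ₂ ε : ℝ} (h : ρ₁ < ρ₂) (hlam : ρ₂ < lam)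
    (hε : |ε| ≤ ρ₂ - ρ₁) (w : ℂ) : Heps ρ₁ ρ₂ ε w ∈ ball 0 lam ↔ w ∈ ball 0 lam := by
  simp only [mem_ball_zero_iff]
  rcases le_or_gt ‖w‖ ρ₂ with hw | hw
  · exact iff_of_true ((norm_Heps_le h hε hw).trans_lt hlam) (hw.trans_lt hlam)
  · rw [Heps_of_lt_norm ε h hw]

theorem lipschitzWith_Heps_sub_id {ρ₁ ρ₂ : ℝ} (ε : ℝ) (h : ρ₁ < ρ₂) :
    LipschitzWith (Real.toNNReal (ρ₂ - ρ₁)⁻¹ * ‖(ε : ℂ)‖₊) (Heps ρ₁ ρ₂ ε - id) := by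
  convert (lipschitzWith_rampDown h).smul_comp_norm (ε : ℂ) using 1
  ext1 w
  simp [Heps_eq_add_rampDown ε h]

noncomputable def Heps.homeomorph {ρ₁ ρ₂ ε : ℝ} (h : ρ₁ < ρ₂) (hε : |ε| < ρ₂ - ρ₁) : ℂ ≃ₜ ℂ :=
  Homeomorph.ofLipschitzWithSubId (lipschitzWith_Heps_sub_id ε h) (by
    have hρ : 0 < ρ₂ - ρ₁ := sub_pos.2 h
    rw [← NNReal.coe_lt_coe, NNReal.coe_mul, Real.coe_toNNReal _ (inv_nonneg.2 hρ.le),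
      coe_nnnorm, Complex.norm_real, Real.norm_eq_abs, NNReal.coe_one, inv_mul_lt_one₀ hρ]
    exact hε)

theorem Heps_homeomorph_of_disk_general (lam ρ₁ ρ₂ ε : ℝ)
    (h₂ : ρ₁ < ρ₂) (h₃ : ρ₂ < lam) (hε : 0 < ε) (hρε : ρ₁ + ε < ρ₂) :
    Set.MapsTo (Heps ρ₁ ρ₂ ε) (Metric.ball (0 : ℂ) lam) (Metric.ball (0 : ℂ) lam) ∧
    (∃ h : (Metric.ball (0 : ℂ) lam) ≃ₜ (Metric.ball (0 : ℂ) lam),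
      ∀ w : Metric.ball (0 : ℂ) lam, (h w : ℂ) = Heps ρ₁ ρ₂ ε (w : ℂ)) ∧
    (∀ w : ℂ, ρ₂ < ‖w‖ → ‖w‖ < lam → Heps ρ₁ ρ₂ ε w = w) := by
  have hε' : |ε| < ρ₂ - ρ₁ := by rw [abs_of_pos hε]; linarith
  have hball := Heps_mem_ball_iff (ε := ε) h₂ h₃ hε'.le
  refine ⟨fun w hw => (hball w).2 hw, ⟨(Heps.homeomorph h₂ hε').subtype fun w => (hball w).symm,
    fun w => rfl⟩, fun w hw _ => Heps_of_lt_norm ε h₂ hw⟩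

theorem Heps_homeomorph_of_disk (lam ρ₁ ρ₂ ε : ℝ)
    (h₁ : 0 < ρ₁) (h₂ : ρ₁ < ρ₂) (h₃ : ρ₂ < lam) (hε : 0 < ε) (hρε : ρ₁ + ε < ρ₂) :
    Set.MapsTo (Heps ρ₁ ρ₂ ε) (Metric.ball (0 : ℂ) lam) (Metric.ball (0 : ℂ) lam) ∧
    (∃ h : (Metric.ball (0 : ℂ) lam) ≃ₜ (Metric.ball (0 : ℂ) lam),
      ∀ w : Metric.ball (0 : ℂ) lam, (h w : ℂ) = Heps ρ₁ ρ₂ ε (w : ℂ)) ∧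
    (∀ w : ℂ, ρ₂ < ‖w‖ → ‖w‖ < lam → Heps ρ₁ ρ₂ ε w = w) :=
  Heps_homeomorph_of_disk_general lam ρ₁ ρ₂ ε h₂ h₃ hε hρε
end

section
/- Let 0 < r < 1, let F : ℂ → ℂ be the affine map F(W) = rW + 1, let a = 1/(1−r) be its fixed point, and let I = {x ∈ ℝ : x ≥ a}, regarded as a subset of ℂ. Then F(I) = I and F(ℂ ∖ I) = ℂ ∖ I, and the restriction F : ℂ ∖ I → ℂ ∖ I is topologically conjugate to the translation G(W) = W + 1 on ℂ: there exists a homeomorphism Φ : ℂ ∖ I → ℂ such that Φ(F(W)) = Φ(W) + 1 for all W ∈ ℂ ∖ I. -/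
/-- The model map `F(W) = rW + 1` on `ℂ`. -/
noncomputable def Fmap (r : ℝ) : ℂ → ℂ := fun W => (r : ℂ) * W + 1

/-- The invariant half-line `I = [a, ∞) ⊂ ℝ ⊂ ℂ`, where `a = 1/(1-r)` is the
fixed point of `F`. -/
def Iset (r : ℝ) : Set ℂ := {z | z.im = 0 ∧ 1 / (1 - r) ≤ z.re}

open Complex Real Set

namespace FmapConjAux

/-- The conjugating map: `Φ(W) = log|a - W| / log r + i·tan(arg(a-W)/2)`. -/
noncomputable def Phi (r : ℝ) (W : ℂ) : ℂ :=
  ↑(Real.log ‖(((1 / (1 - r) : ℝ) : ℂ) - W)‖ / Real.log r) +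
  ↑(Real.tan ((((1 / (1 - r) : ℝ) : ℂ) - W).arg / 2)) * Complex.I

/-- The inverse map. -/
noncomputable def Psi (r : ℝ) (z : ℂ) : ℂ :=
  ((1 / (1 - r) : ℝ) : ℂ) -
    ↑(Real.exp (Real.log r * z.re)) *
      (↑(Real.cos (2 * Real.arctan z.im)) + ↑(Real.sin (2 * Real.arctan z.im)) * Complex.I)

variable {r : ℝ}

lemma sub_mul_im (a ρ c s : ℝ) :
    ((a : ℂ) - ↑ρ * (↑c + ↑s * Complex.I)).im = -(ρ * s) := by simp

lemma sub_mul_re (a ρ c s : ℝ) :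
    ((a : ℂ) - ↑ρ * (↑c + ↑s * Complex.I)).re = a - ρ * c := by simp

lemma add_mul_I_re (x y : ℝ) : ((x : ℂ) + ↑y * Complex.I).re = x := by simp

lemma add_mul_I_im (x y : ℝ) : ((x : ℂ) + ↑y * Complex.I).im = y := by simp

lemma mem_compl_iff {W : ℂ} : W ∈ (Iset r)ᶜ ↔ W.im ≠ 0 ∨ W.re < 1 / (1 - r) := by
  rw [Set.mem_compl_iff, Iset, Set.mem_setOf_eq, not_and_or, not_le]

lemma slit (hW : W ∈ (Iset r)ᶜ) : ((1 / (1 - r) : ℝ) : ℂ) - W ∈ Complex.slitPlane := by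
  rw [mem_compl_iff] at hW
  rw [Complex.mem_slitPlane_iff]
  rcases hW with h | h
  · right
    simp only [Complex.sub_im, Complex.ofReal_im, zero_sub, ne_eq, neg_eq_zero]
    exact h
  · left
    simp only [Complex.sub_re, Complex.ofReal_re]
    linarith

lemma slit_ne_zero {Z : ℂ} (h : Z ∈ Complex.slitPlane) : Z ≠ 0 := by
  rintro rfl
  rw [Complex.mem_slitPlane_iff] at h
  simp at h

lemma arg_bounds {Z : ℂ} (h : Z ∈ Complex.slitPlane) : -π < Z.arg ∧ Z.arg < π := by
  refine ⟨Complex.neg_pi_lt_arg Z, ?_⟩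
  rw [Complex.arg_lt_pi_iff]
  rw [Complex.mem_slitPlane_iff] at h
  rcases h with h | h
  · left; linarith
  · right; exact h

lemma log_r_ne (hr0 : 0 < r) (hr1 : r < 1) : Real.log r ≠ 0 :=
  ne_of_lt (Real.log_neg hr0 hr1)

lemma theta_bounds (v : ℝ) : -π < 2 * Real.arctan v ∧ 2 * Real.arctan v < π := by
  have h1 := Real.neg_pi_div_two_lt_arctan v
  have h2 := Real.arctan_lt_pi_div_two v
  constructor <;> linarith

/-- `Ψ` always lands in the complement of `I`. -/
lemma psi_mem (hr0 : 0 < r) (z : ℂ) : Psi r z ∈ (Iset r)ᶜ := by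
  set θ := 2 * Real.arctan z.im with hθ
  set ρ := Real.exp (Real.log r * z.re) with hρ
  have hρ0 : 0 < ρ := Real.exp_pos _
  rw [mem_compl_iff]
  have him : (Psi r z).im = -(ρ * Real.sin θ) := by
    rw [Psi]; exact sub_mul_im _ _ _ _
  have hre : (Psi r z).re = 1 / (1 - r) - ρ * Real.cos θ := by
    rw [Psi]; exact sub_mul_re _ _ _ _
  by_cases hs : Real.sin θ = 0
  · right
    obtain ⟨hb1, hb2⟩ := theta_bounds z.im
    have hθ0 : θ = 0 := (Real.sin_eq_zero_iff_of_lt_of_lt hb1 hb2).mp hs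
    rw [hre, hθ0]
    simp only [Real.cos_zero, mul_one]
    linarith
  · left
    rw [him]
    intro h
    apply hs
    have : ρ * Real.sin θ = 0 := by linarith
    rcases mul_eq_zero.mp this with h' | h'
    · exact absurd h' (ne_of_gt hρ0)
    · exact h'

/-- The key algebraic identity: `a - F(W) = r · (a - W)`. -/
lemma key (hr1 : r < 1) (W : ℂ) :
    ((1 / (1 - r) : ℝ) : ℂ) - Fmap r W = (r : ℂ) * (((1 / (1 - r) : ℝ) : ℂ) - W) := by
  have h1r : (1 : ℝ) - r ≠ 0 := by intro h; linarith [h]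
  have h1rc : (1 : ℂ) - (r : ℂ) ≠ 0 := by
    intro h
    apply h1r
    have := congrArg Complex.re h
    simpa using this
  simp only [Fmap]
  push_cast
  field_simp
  ring

/-- The conjugation equation. -/
lemma phi_conj (hr0 : 0 < r) (hr1 : r < 1) (W : ℂ) (hW : W ∈ (Iset r)ᶜ) :
    Phi r (Fmap r W) = Phi r W + 1 := by
  set Z := ((1 / (1 - r) : ℝ) : ℂ) - W with hZ
  have hslit : Z ∈ Complex.slitPlane := slit hW
  have hZ0 : Z ≠ 0 := slit_ne_zero hslit
  have habs : ‖Z‖ ≠ 0 := by simpa using hZ0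
  have hkey : ((1 / (1 - r) : ℝ) : ℂ) - Fmap r W = (r : ℂ) * Z := key hr1 W
  have harg : ((r : ℂ) * Z).arg = Z.arg := Complex.arg_real_mul Z hr0
  have habs2 : ‖(r : ℂ) * Z‖ = r * ‖Z‖ := by
    rw [norm_mul, Complex.norm_real, Real.norm_eq_abs, abs_of_pos hr0]
  have hlog : Real.log (r * ‖Z‖) = Real.log r + Real.log ‖Z‖ :=
    Real.log_mul (ne_of_gt hr0) habs
  rw [Phi, Phi, hkey, harg, habs2, hlog, ← hZ]
  have hlr : Real.log r ≠ 0 := log_r_ne hr0 hr1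
  rw [add_div, div_self hlr]
  push_cast
  ring

/-- Left inverse: `Ψ ∘ Φ = id` on the complement of `I`. -/
lemma psi_phi (hr0 : 0 < r) (hr1 : r < 1) (W : ℂ) (hW : W ∈ (Iset r)ᶜ) :
    Psi r (Phi r W) = W := by
  set Z := ((1 / (1 - r) : ℝ) : ℂ) - W with hZ
  have hslit : Z ∈ Complex.slitPlane := slit hW
  have hZ0 : Z ≠ 0 := slit_ne_zero hslit
  have habs : 0 < ‖Z‖ := by
    rw [norm_pos_iff]; exact hZ0
  obtain ⟨hb1, hb2⟩ := arg_bounds hslit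
  have hlr : Real.log r ≠ 0 := log_r_ne hr0 hr1
  have hre : (Phi r W).re = Real.log ‖Z‖ / Real.log r := by
    rw [Phi]; exact add_mul_I_re _ _
  have him : (Phi r W).im = Real.tan (Z.arg / 2) := by
    rw [Phi]; exact add_mul_I_im _ _
  rw [Psi, hre, him]
  have h1 : Real.log r * (Real.log ‖Z‖ / Real.log r) =
      Real.log ‖Z‖ := by field_simp
  have h2 : Real.arctan (Real.tan (Z.arg / 2)) = Z.arg / 2 :=
    Real.arctan_tan (by linarith) (by linarith)
  rw [h1, Real.exp_log habs, h2]
  have h3 : 2 * (Z.arg / 2) = Z.arg := by ring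
  rw [h3, Complex.ofReal_cos, Complex.ofReal_sin, Complex.norm_mul_cos_add_sin_mul_I]
  rw [hZ]; ring

/-- Right inverse: `Φ ∘ Ψ = id` on `ℂ`. -/
lemma phi_psi (hr0 : 0 < r) (hr1 : r < 1) (z : ℂ) : Phi r (Psi r z) = z := by
  set θ := 2 * Real.arctan z.im with hθ
  set ρ := Real.exp (Real.log r * z.re) with hρ
  have hρ0 : 0 < ρ := Real.exp_pos _
  obtain ⟨hb1, hb2⟩ := theta_bounds z.im
  have hZ : ((1 / (1 - r) : ℝ) : ℂ) - Psi r z =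
      (ρ : ℂ) * (Complex.cos θ + Complex.sin θ * Complex.I) := by
    rw [Psi, Complex.ofReal_cos, Complex.ofReal_sin]; ring
  have habs : ‖(((1 / (1 - r) : ℝ) : ℂ) - Psi r z)‖ = ρ := by
    rw [hZ, norm_mul, Complex.norm_real, Real.norm_eq_abs, abs_of_pos hρ0,
      Complex.norm_cos_add_sin_mul_I, mul_one]
  have harg : (((1 / (1 - r) : ℝ) : ℂ) - Psi r z).arg = θ := by
    rw [hZ, Complex.arg_real_mul _ hρ0,
      Complex.arg_cos_add_sin_mul_I ⟨hb1, le_of_lt hb2⟩]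
  have hlr : Real.log r ≠ 0 := log_r_ne hr0 hr1
  rw [Phi, habs, harg, hρ, Real.log_exp, mul_div_cancel_left₀ _ hlr]
  have h4 : θ / 2 = Real.arctan z.im := by rw [hθ]; ring
  rw [h4, Real.tan_arctan, Complex.re_add_im]

lemma isClosed_Iset : IsClosed (Iset r) := by
  have : Iset r = Complex.im ⁻¹' {0} ∩ Complex.re ⁻¹' (Ici (1 / (1 - r))) := by
    ext z; simp [Iset, Set.mem_setOf_eq]
  rw [this]
  exact (isClosed_singleton.preimage Complex.continuous_im).inter
    (isClosed_Ici.preimage Complex.continuous_re)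

lemma phi_continuousOn (hr0 : 0 < r) (hr1 : r < 1) :
    ContinuousOn (Phi r) ((Iset r)ᶜ) := by
  have hopen : IsOpen ((Iset r)ᶜ) := isClosed_Iset.isOpen_compl
  intro W hW
  apply ContinuousAt.continuousWithinAt
  set Z := ((1 / (1 - r) : ℝ) : ℂ) - W with hZ
  have hslit : Z ∈ Complex.slitPlane := slit hW
  have hZ0 : Z ≠ 0 := slit_ne_zero hslit
  have habs : ‖Z‖ ≠ 0 := by simpa using hZ0
  obtain ⟨hb1, hb2⟩ := arg_bounds hslit
  have hsub : ContinuousAt (fun V : ℂ => ((1 / (1 - r) : ℝ) : ℂ) - V) W :=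
    (continuousAt_const.sub continuousAt_id)
  have habsC : ContinuousAt (fun V : ℂ => ‖(((1 / (1 - r) : ℝ) : ℂ) - V)‖) W :=
    continuous_norm.continuousAt.comp hsub
  have hlogC : ContinuousAt
      (fun V : ℂ => Real.log ‖(((1 / (1 - r) : ℝ) : ℂ) - V)‖) W :=
    ContinuousAt.comp (x := W) (Real.continuousAt_log habs) habsC
  have hargC : ContinuousAt (fun V : ℂ => (((1 / (1 - r) : ℝ) : ℂ) - V).arg) W :=
    ContinuousAt.comp (x := W) (Complex.continuousAt_arg hslit) hsub
  have hcos : Real.cos (Z.arg / 2) ≠ 0 := by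
    apply ne_of_gt
    apply Real.cos_pos_of_mem_Ioo
    constructor <;> [linarith; linarith]
  have htanC : ContinuousAt
      (fun V : ℂ => Real.tan ((((1 / (1 - r) : ℝ) : ℂ) - V).arg / 2)) W :=
    ContinuousAt.comp (x := W) (g := Real.tan)
      (f := fun V : ℂ => (((1 / (1 - r) : ℝ) : ℂ) - V).arg / 2)
      (Real.continuousAt_tan.mpr hcos) (hargC.div_const 2)
  exact ((ContinuousAt.comp (x := W) Complex.continuous_ofReal.continuousAt
      (hlogC.div_const _)).add
    ((ContinuousAt.comp (x := W) Complex.continuous_ofReal.continuousAt htanC).mul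
      continuousAt_const))

lemma psi_continuous : Continuous (Psi r) := by
  apply Continuous.sub continuous_const
  apply Continuous.mul
  · exact Complex.continuous_ofReal.comp
      (Real.continuous_exp.comp (continuous_const.mul Complex.continuous_re))
  · apply Continuous.add
    · exact Complex.continuous_ofReal.comp
        (Real.continuous_cos.comp (continuous_const.mul
          (Real.continuous_arctan.comp Complex.continuous_im)))
    · exact (Complex.continuous_ofReal.comp
        (Real.continuous_sin.comp (continuous_const.mul
          (Real.continuous_arctan.comp Complex.continuous_im)))).mul continuous_const

end FmapConjAux

open FmapConjAux in
/-- For `0 < r < 1`, `F(W) = rW + 1` leaves `I = [a,∞)` and its complement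
invariant, and `F : ℂ ∖ I → ℂ ∖ I` is topologically conjugate to the
translation `G(W) = W + 1` on `ℂ`. -/
theorem Fmap_on_complement_conjugate_to_translation (r : ℝ) (hr0 : 0 < r) (hr1 : r < 1) :
    Fmap r '' Iset r = Iset r ∧
    Fmap r '' (Iset r)ᶜ = (Iset r)ᶜ ∧
    ∃ Φ : ((Iset r)ᶜ : Set ℂ) ≃ₜ ℂ,
      ∀ (W : ℂ) (hW : W ∈ (Iset r)ᶜ) (hFW : Fmap r W ∈ (Iset r)ᶜ),
        Φ ⟨Fmap r W, hFW⟩ = Φ ⟨W, hW⟩ + 1 := by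
  have h1r : (0:ℝ) < 1 - r := by linarith
  have hrne : (r : ℂ) ≠ 0 := by
    simpa using (ne_of_gt hr0)
  have ha : r * (1 / (1 - r)) + 1 = 1 / (1 - r) := by
    field_simp
    ring
  have himg : Fmap r '' Iset r = Iset r := by
    ext z
    constructor
    · rintro ⟨x, ⟨hxi, hxr⟩, rfl⟩
      constructor
      · simp [Fmap, hxi]
      · have : (Fmap r x).re = r * x.re + 1 := by simp [Fmap]
        rw [this, ← ha]
        have : r * (1 / (1 - r)) ≤ r * x.re := by
          apply mul_le_mul_of_nonneg_left hxr (le_of_lt hr0)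
        linarith
    · rintro ⟨hzi, hzr⟩
      refine ⟨((1 / r : ℝ) : ℂ) * (z - 1), ⟨?_, ?_⟩, ?_⟩
      · simp [hzi]
      · have : (((1 / r : ℝ) : ℂ) * (z - 1)).re = (1 / r) * (z.re - 1) := by
          simp
        rw [this]
        rw [div_mul_eq_mul_div, one_mul, le_div_iff₀ hr0]
        rw [← ha] at hzr
        linarith
      · simp only [Fmap]
        push_cast
        field_simp
        ring
  refine ⟨himg, ?_, ?_⟩
  · -- image of complement
    have hbij : Function.Bijective (Fmap r) := by
      rw [Function.bijective_iff_has_inverse]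
      refine ⟨fun z => ((1 / r : ℝ) : ℂ) * (z - 1), fun x => ?_, fun z => ?_⟩
      · simp only [Fmap]
        push_cast
        field_simp
        ring
      · simp only [Fmap]
        push_cast
        field_simp
        ring
    rw [Set.image_compl_eq hbij, himg]
  · -- the conjugacy
    refine ⟨{
      toFun := fun W => Phi r W
      invFun := fun z => ⟨Psi r z, psi_mem hr0 z⟩
      left_inv := fun W => Subtype.ext (psi_phi hr0 hr1 W.1 W.2)
      right_inv := fun z => phi_psi hr0 hr1 z
      continuous_toFun := (phi_continuousOn hr0 hr1).restrict
      continuous_invFun := (psi_continuous).subtype_mk _ }, ?_⟩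
    intro W hW hFW
    exact phi_conj hr0 hr1 W hW
end

section
/- Every path component ('leaf') of the dyadic solenoid 𝕋̂ is dense in 𝕋̂. -/
/-- The dyadic solenoid: the inverse limit of the angle-doubling map
`δ(θ) = 2θ` on the circle `𝕋 = ℝ/ℤ`, inside the product `𝕋^ℕ`. -/
def solenoid : Set (ℕ → AddCircle (1 : ℝ)) :=
  {θ | ∀ n, θ (n + 1) + θ (n + 1) = θ n}

lemma solenoid_pow {θ : ℕ → AddCircle (1:ℝ)} (hθ : θ ∈ solenoid) (n k : ℕ) :
    (2^k : ℕ) • θ (n + k) = θ n := by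
  induction k with
  | zero => simp
  | succ k ih =>
    have h := hθ (n + k)
    have : (2^(k+1) : ℕ) • θ (n + (k+1)) = (2^k : ℕ) • (2 • θ (n + k + 1)) := by
      rw [smul_smul, ← pow_succ]
      rfl
    rw [this, two_smul, h, ih]

lemma solenoid_shift_mem (x : ↥solenoid) (t : ℝ) :
    (fun n => x.1 n + ((t / 2^n : ℝ) : AddCircle (1:ℝ))) ∈ solenoid := by
  intro n
  have hx := x.2 n
  have hr : (t / 2^(n+1) : ℝ) + (t / 2^(n+1) : ℝ) = t / 2^n := by
    rw [pow_succ]; ring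
  calc (x.1 (n+1) + ((t / 2^(n+1) : ℝ) : AddCircle (1:ℝ)))
      + (x.1 (n+1) + ((t / 2^(n+1) : ℝ) : AddCircle (1:ℝ)))
      = (x.1 (n+1) + x.1 (n+1)) + (((t / 2^(n+1) : ℝ) : AddCircle (1:ℝ))
        + ((t / 2^(n+1) : ℝ) : AddCircle (1:ℝ))) := by abel
    _ = x.1 n + ((t / 2^n : ℝ) : AddCircle (1:ℝ)) := by
        rw [hx, ← AddCircle.coe_add, hr]

lemma solenoid_shift_joined (x : ↥solenoid) (t : ℝ) :
    Joined x (⟨_, solenoid_shift_mem x t⟩ : ↥solenoid) := by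
  refine ⟨⟨⟨fun s => ⟨fun n => x.1 n + (((s : ℝ) * t / 2^n : ℝ) : AddCircle (1:ℝ)),
      solenoid_shift_mem x ((s:ℝ)*t)⟩, ?_⟩, ?_, ?_⟩⟩
  · apply Continuous.subtype_mk
    apply continuous_pi
    intro n
    exact continuous_const.add ((AddCircle.continuous_mk' _).comp
      (((continuous_subtype_val.mul continuous_const).div_const _)))
  · ext n; simp
  · ext n; simp

/-- Every path component (leaf) of the dyadic solenoid is dense in it. -/
theorem leaf_dense_in_solenoid (x : ↥solenoid) : Dense (pathComponent x) := by
  intro y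
  -- construct points of the leaf agreeing with y up to N
  have key : ∀ N : ℕ, ∃ z : ↥solenoid, z ∈ pathComponent x ∧ ∀ n ≤ N, z.1 n = y.1 n := by
    intro N
    obtain ⟨r, hr⟩ := QuotientAddGroup.mk_surjective (y.1 N - x.1 N)
    refine ⟨⟨_, solenoid_shift_mem x (2^N * r)⟩, mem_pathComponent_iff.mpr (solenoid_shift_joined x _), ?_⟩
    intro n hn
    have h1 : (2^N * r / 2^n : ℝ) = ((2^(N-n) : ℕ) : ℝ) * r := by
      have h2N : (2:ℝ)^N = 2^(N-n) * 2^n := by rw [← pow_add]; congr 1; omega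
      push_cast
      rw [h2N]
      field_simp
    show x.1 n + ((2^N * r / 2^n : ℝ) : AddCircle (1:ℝ)) = y.1 n
    rw [h1]
    have h2 : (((2^(N-n) : ℕ) : ℝ) * r : ℝ) = (2^(N-n) : ℕ) • r := by
      simp [nsmul_eq_mul]
    rw [h2]
    have h3 : (((2^(N-n) : ℕ) • r : ℝ) : AddCircle (1:ℝ)) = (2^(N-n) : ℕ) • (r : AddCircle (1:ℝ)) := by
      exact AddCircle.coe_nsmul _
    rw [h3, hr, smul_sub]
    have hNn : n + (N - n) = N := by omega
    have hxs := solenoid_pow x.2 n (N-n); rw [hNn] at hxs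
    have hys := solenoid_pow y.2 n (N-n); rw [hNn] at hys
    rw [hxs, hys]; abel
  choose z hz hagree using key
  apply mem_closure_of_tendsto (f := z) (b := Filter.atTop)
  · rw [tendsto_subtype_rng, tendsto_pi_nhds]
    intro n
    apply Filter.Tendsto.congr' _ tendsto_const_nhds
    filter_upwards [Filter.eventually_ge_atTop n] with N hN
    exact (hagree N n hN).symm
  · exact Filter.Eventually.of_forall hz
end
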